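/- Let G be a core graph that is not isomorphic to the 5-wheel W5 and not isomorphic to the complement of W5, and suppose G contains a 5-hole C. Then every vertex u ∈ V(G) \ V(C) satisfies exactly one of the following: (i) u has exactly two neighbors on C and these two neighbors are consecutive on C; (ii) u has exactly three neighbors on C and these three neighbors are not three consecutive vertices of C. -/

import Mathlib

/-!
Let `u` be a vertex off the 5-hole `C`, with neighbourhood `I` on `C`. The graph induced on
`C + u` is determined by `I`, and a finite check over the 32 possible `I` shows that either
`I` is as claimed, or `I = C`, or `I = ∅`, or one t-contraction of `C + u` or of its
complement yields `K₄`. The graphs `K₄` and `W₅` are not t-perfect: the points `1/3` and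
(`2/5` on the rim, `1/5` at the hub) lie in `P` but violate the bound `α` on the total weight.
So in a core graph no proper t-minor of `G` or `Gᶜ` is `K₄` or `W₅`. This rules out the
contraction cases, and for `I = C` (resp. `I = ∅`) the copy of `W₅` induced on `C + u` in `G`
(resp. `Gᶜ`) must be all of it.
-/

open SimpleGraph

namespace TP

/-- A set of vertices is independent: no two of its vertices are adjacent. -/
def IsIndep {V : Type*} (G : SimpleGraph V) (S : Set V) : Prop :=
  S.Pairwise fun u v => ¬ G.Adj u v

/-- The finite vertex set `s` induces a cycle of length `n` in `G`. -/
def IsInducedCycle {V : Type*} (G : SimpleGraph V) (n : ℕ) (s : Finset V) : Prop :=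
  3 ≤ n ∧ s.card = n ∧ Nonempty (G.induce (s : Set V) ≃g SimpleGraph.cycleGraph n)

/-- The polytope `P(G)` given by nonnegativity, edge and odd-cycle inequalities. -/
def tPolytope {V : Type*} [Fintype V] (G : SimpleGraph V) : Set (V → ℝ) :=
  {x | (∀ v, 0 ≤ x v ∧ x v ≤ 1) ∧
    (∀ ⦃u v⦄, G.Adj u v → x u + x v ≤ 1) ∧
    (∀ (n : ℕ) (s : Finset V), Odd n → IsInducedCycle G n s →
      ∑ v ∈ s, x v ≤ ((n : ℝ) - 1) / 2)}

/-- The independent set polytope: the convex hull of characteristic vectors of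
independent sets. -/
def stabPolytope {V : Type*} [Fintype V] (G : SimpleGraph V) : Set (V → ℝ) :=
  convexHull ℝ {x | ∃ S : Set V, IsIndep G S ∧ x = S.indicator fun _ => (1 : ℝ)}

/-- A graph is t-perfect if `P(G)` equals its independent set polytope. -/
def TPerfect {V : Type*} [Fintype V] (G : SimpleGraph V) : Prop :=
  tPolytope G = stabPolytope G

/-- The graph obtained from `G` by a t-contraction at `v` : the closed neighbourhood
of `v` is replaced by a single new vertex (`none`), adjacent to every vertex that had
a neighbour in the closed neighbourhood of `v`. -/
def tContract {V : Type*} (G : SimpleGraph V) (v : V) :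
    SimpleGraph (Option {w : V // w ≠ v ∧ ¬ G.Adj v w}) :=
  SimpleGraph.fromRel fun a b =>
    match a, b with
    | some a, some b => G.Adj a.1 b.1
    | some a, none => ∃ x, (x = v ∨ G.Adj v x) ∧ G.Adj a.1 x
    | none, _ => False

/-- A bundled finite simple graph. -/
structure FinGraph : Type 1 where
  V : Type
  [fintype : Fintype V]
  graph : SimpleGraph V

attribute [instance] FinGraph.fintype

def FinGraph.of {V : Type} [Fintype V] (G : SimpleGraph V) : FinGraph :=
  FinGraph.mk V G

/-- `B` is obtained from `A` by deleting one vertex (up to isomorphism). -/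
def DeleteStep (A B : FinGraph) : Prop :=
  ∃ v : A.V, Nonempty (B.graph ≃g A.graph.induce {w | w ≠ v})

/-- `B` is obtained from `A` by a t-contraction at a vertex whose neighbourhood is
independent (up to isomorphism). -/
def ContractStep (A B : FinGraph) : Prop :=
  ∃ v : A.V, IsIndep A.graph (A.graph.neighborSet v) ∧
    Nonempty (B.graph ≃g tContract A.graph v)

/-- One step: a vertex deletion or a t-contraction. -/
def Step (A B : FinGraph) : Prop := DeleteStep A B ∨ ContractStep A B

/-- `TMinor B A` : `B` is a t-minor of `A`, i.e. obtained from `A` by a sequence of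
vertex deletions and t-contractions. -/
def TMinor (B A : FinGraph) : Prop := Relation.ReflTransGen Step A B

/-- `B` is a proper t-minor of `A` : a t-minor with fewer vertices. -/
def ProperTMinor (B A : FinGraph) : Prop :=
  TMinor B A ∧ Fintype.card B.V < Fintype.card A.V

/-- A graph is minimally t-imperfect if it is not t-perfect but every proper t-minor
of it is t-perfect. -/
def MinimallyTImperfect {V : Type} [Fintype V] (G : SimpleGraph V) : Prop :=
  ¬ TPerfect G ∧ ∀ B : FinGraph, ProperTMinor B (FinGraph.of G) → TPerfect B.graph

/-- A core graph: every proper t-minor of `G` and every proper t-minor of its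
complement is t-perfect. -/
def IsCore {V : Type} [Fintype V] (G : SimpleGraph V) : Prop :=
  (∀ B : FinGraph, ProperTMinor B (FinGraph.of G) → TPerfect B.graph) ∧
  (∀ B : FinGraph, ProperTMinor B (FinGraph.of Gᶜ) → TPerfect B.graph)

/-- A partition of `V \ {v}` into `count` sets of size `size`, all satisfying `P`. -/
def CoverOff {V : Type*} (v : V) (count size : ℕ) (P : Finset V → Prop) : Prop :=
  ∃ f : Fin count → Finset V,
    (∀ i, P (f i) ∧ (f i).card = size) ∧
    (∀ i j, i ≠ j → Disjoint (f i) (f j)) ∧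
    (∀ i, v ∉ f i) ∧
    (∀ w, w ≠ v → ∃ i, w ∈ f i)

/-- `(p,q)`-partitionable graphs. -/
def PQPartitionable {V : Type*} [Fintype V] (G : SimpleGraph V) (p q : ℕ) : Prop :=
  2 ≤ p ∧ 2 ≤ q ∧ Fintype.card V = p * q + 1 ∧
  ∀ v : V,
    CoverOff v q p (fun S => IsIndep G (S : Set V)) ∧
    CoverOff v p q (fun S => G.IsClique (S : Set V))

/-- `G` has an odd hole: an induced odd cycle of length at least five. -/
def HasOddHole {V : Type*} (G : SimpleGraph V) : Prop :=
  ∃ (n : ℕ) (s : Finset V), Odd n ∧ 5 ≤ n ∧ IsInducedCycle G n s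

/-- A graph is perfect iff neither it nor its complement has an odd hole. -/
def GPerfect {V : Type*} (G : SimpleGraph V) : Prop :=
  ¬ HasOddHole G ∧ ¬ HasOddHole Gᶜ

/-- Every vertex has degree at least three and at most five. -/
def DegreeBounded {V : Type*} (G : SimpleGraph V) : Prop :=
  ∀ v, 3 ≤ (G.neighborSet v).ncard ∧ (G.neighborSet v).ncard ≤ 5

/-- The `n`-wheel: an `n`-cycle plus a vertex (`none`) adjacent to every cycle vertex. -/
def wheel (n : ℕ) : SimpleGraph (Option (Fin n)) :=
  SimpleGraph.fromRel fun a b =>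
    match a, b with
    | some i, some j => (SimpleGraph.cycleGraph n).Adj i j
    | none, some _ => True
    | _, none => False

/-- Vertex type of the standard 9-vertex labeling: `inl i` is `v_{i+1}`,
`inr j` is `u_{j+1}`. -/
abbrev V9 := Fin 5 ⊕ Fin 4

/-- Vertex type of the standard 10-vertex labeling. -/
abbrev V10 := Fin 5 ⊕ Fin 5

/-- The standard 9-vertex labeling: `v1 … v5` form a 5-hole; the neighbours of `u_i`
among the `v`'s are `v_{i+2}` and `v_{i+3}` together possibly with `v_i`. -/
def Std9 (G : SimpleGraph V9) : Prop :=
  (∀ i j : Fin 5, G.Adj (.inl i) (.inl j) ↔ (j = i + 1 ∨ i = j + 1)) ∧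
  (∀ (i : Fin 4) (k : Fin 5), G.Adj (.inr i) (.inl k) →
    k = i.castSucc + 2 ∨ k = i.castSucc + 3 ∨ k = i.castSucc) ∧
  (∀ i : Fin 4, G.Adj (.inr i) (.inl (i.castSucc + 2)) ∧ G.Adj (.inr i) (.inl (i.castSucc + 3)))

/-- The standard 10-vertex labeling. -/
def Std10 (G : SimpleGraph V10) : Prop :=
  (∀ i j : Fin 5, G.Adj (.inl i) (.inl j) ↔ (j = i + 1 ∨ i = j + 1)) ∧
  (∀ (i k : Fin 5), G.Adj (.inr i) (.inl k) → k = i + 2 ∨ k = i + 3 ∨ k = i) ∧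
  (∀ i : Fin 5, G.Adj (.inr i) (.inl (i + 2)) ∧ G.Adj (.inr i) (.inl (i + 3)))

/-- The 9-vertex graph of the standard labeling with prescribed `U`-edges and
prescribed extra edges `u_i v_i`. -/
def graph9 (uEdges : List (Fin 4 × Fin 4)) (extra : List (Fin 4)) : SimpleGraph V9 :=
  SimpleGraph.fromRel fun a b =>
    match a, b with
    | .inl i, .inl j => j = i + 1
    | .inr i, .inl k => k = i.castSucc + 2 ∨ k = i.castSucc + 3 ∨ (i ∈ extra ∧ k = i.castSucc)
    | .inl _, .inr _ => False
    | .inr i, .inr j => (i, j) ∈ uEdges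

/-- The 10-vertex graph of the standard labeling with prescribed `U`-edges and
prescribed extra edges `u_i v_i`. -/
def graph10 (uEdges : List (Fin 5 × Fin 5)) (extra : List (Fin 5)) : SimpleGraph V10 :=
  SimpleGraph.fromRel fun a b =>
    match a, b with
    | .inl i, .inl j => j = i + 1
    | .inr i, .inl k => k = i + 2 ∨ k = i + 3 ∨ (i ∈ extra ∧ k = i)
    | .inl _, .inr _ => False
    | .inr i, .inr j => (i, j) ∈ uEdges

/-- The graph `(12°435°1)`. -/
def G12435 : SimpleGraph V10 :=
  graph10 [(0,1),(1,3),(3,2),(2,4),(4,0)] [1,4]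

/-- The graph `(1°2°435°1°)`. -/
def G12435' : SimpleGraph V10 :=
  graph10 [(0,1),(1,3),(3,2),(2,4),(4,0)] [0,1,4]

def _root_.SimpleGraph.Iso.compl {V W : Type*} {G : SimpleGraph V} {H : SimpleGraph W}
    (e : G ≃g H) : Gᶜ ≃g Hᶜ where
  toEquiv := e.toEquiv
  map_rel_iff' := by simp [e.injective.ne_iff, e.map_adj_iff]

section TMinors

variable {V W : Type} [Fintype V] [Fintype W] {G : SimpleGraph V} {H : SimpleGraph W}

def _root_.SimpleGraph.Embedding.restrictNe (g : H ↪g G) {v : V} (hv : v ∉ Set.range g) :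
    H ↪g G.induce {w | w ≠ v} where
  toFun x := ⟨g x, fun h => hv ⟨x, h⟩⟩
  inj' _ _ h := g.injective (congrArg Subtype.val h)
  map_rel_iff' := g.map_adj_iff

theorem tMinor_of_embedding (g : H ↪g G) (hg : ¬ Function.Surjective g) :
    TMinor (FinGraph.of H) (FinGraph.of G) := by
  induction hn : Fintype.card V using Nat.strong_induction_on generalizing V with
  | _ n ih =>
  classical
  obtain ⟨v, hv⟩ := not_forall.1 hg
  by_cases hg' : Function.Surjective (g.restrictNe hv)
  · exact .single (Or.inl ⟨v, ⟨RelIso.ofSurjective _ hg'⟩⟩)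
  · have hcard : Fintype.card {w | w ≠ v} < n :=
      hn ▸ Fintype.card_subtype_lt (p := (· ≠ v)) (not_not.2 rfl)
    have hdelete : Step (FinGraph.of G) (FinGraph.of (G.induce {w | w ≠ v})) :=
      Or.inl ⟨v, ⟨.refl⟩⟩
    exact (Relation.ReflTransGen.single hdelete).trans (ih _ hcard (g.restrictNe hv) hg' rfl)

theorem properTMinor_of_embedding (g : H ↪g G) (hg : ¬ Function.Surjective g) :
    ProperTMinor (FinGraph.of H) (FinGraph.of G) :=
  ⟨tMinor_of_embedding g hg, Fintype.card_lt_of_injective_not_surjective g g.injective hg⟩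

end TMinors

section Contraction

variable {V V' : Type*} {G : SimpleGraph V} {G' : SimpleGraph V'} {v : V}

@[simp] theorem tContract_adj_some_some {a b : {w : V // w ≠ v ∧ ¬ G.Adj v w}} :
    (tContract G v).Adj (some a) (some b) ↔ G.Adj a.1 b.1 := by
  simp only [tContract, fromRel_adj, ne_eq, Option.some.injEq]
  exact ⟨fun h => h.2.elim id (·.symm), fun h => ⟨fun hab => G.irrefl (hab ▸ h), .inl h⟩⟩

@[simp] theorem tContract_adj_some_none {a : {w : V // w ≠ v ∧ ¬ G.Adj v w}} :
    (tContract G v).Adj (some a) none ↔ ∃ x, (x = v ∨ G.Adj v x) ∧ G.Adj a.1 x := by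
  simp [tContract]

@[simp] theorem tContract_adj_none_none : ¬ (tContract G v).Adj none none :=
  (tContract G v).irrefl

instance [Fintype V] [DecidableEq V] [DecidableRel G.Adj] : DecidableRel (tContract G v).Adj
  | some _, some _ => decidable_of_iff' _ tContract_adj_some_some
  | some _, none => decidable_of_iff' _ tContract_adj_some_none
  | none, some _ =>
    decidable_of_iff' _ (((tContract G v).adj_comm _ _).trans tContract_adj_some_none)
  | none, none => decidable_of_iff' _ (iff_false_intro tContract_adj_none_none)

def _root_.SimpleGraph.Iso.tContract (e : G ≃g G') (v : V) :
    tContract G v ≃g tContract G' (e v) where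
  toEquiv := Equiv.optionCongr (e.toEquiv.subtypeEquiv fun w => by simp [e.map_adj_iff])
  map_rel_iff' := by
    rintro (_ | a) (_ | b)
    · simp
    · rw [adj_comm, adj_comm _ none]
      simp [e.surjective.exists, e.map_adj_iff]
    · simp [e.surjective.exists, e.map_adj_iff]
    · simp [e.map_adj_iff]

end Contraction

section ContractStep

variable {V W : Type} [Fintype V] [Fintype W] {G : SimpleGraph V} {H : SimpleGraph W}

theorem ContractStep.of_iso (e : G ≃g H) {K : FinGraph} (h : ContractStep (FinGraph.of H) K) :
    ContractStep (FinGraph.of G) K := by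
  obtain ⟨v, hind, ⟨k⟩⟩ := h
  refine ⟨e.symm v, fun x (hx : G.Adj _ x) y (hy : G.Adj _ y) hne hxy => ?_,
    ⟨k.trans (e.symm.tContract v)⟩⟩
  have hnbr {z : V} (hz : G.Adj (e.symm v) z) : H.Adj v (e z) :=
    e.symm.map_adj_iff.1 (by rwa [e.symm_apply_apply])
  exact hind (hnbr hx) (hnbr hy) (e.injective.ne hne) (e.map_adj_iff.2 hxy)

theorem properTMinor_of_embedding_of_contractStep (g : H ↪g G) {K : FinGraph}
    (hK : ContractStep (FinGraph.of H) K) (hcard : Fintype.card K.V < Fintype.card W) :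
    ProperTMinor K (FinGraph.of G) := by
  have hHG : Fintype.card W ≤ Fintype.card V := Fintype.card_le_of_injective g g.injective
  by_cases hg : Function.Surjective g
  · exact ⟨.single (Or.inr (hK.of_iso (RelIso.ofSurjective g hg).symm)), hcard.trans_le hHG⟩
  · exact ⟨(tMinor_of_embedding g hg).tail (Or.inr hK), hcard.trans_le hHG⟩

end ContractStep

theorem IsInducedCycle.isNClique_three {V : Type*} {G : SimpleGraph V} {s : Finset V}
    (h : IsInducedCycle G 3 s) : G.IsNClique 3 s := by
  obtain ⟨-, hcard, ⟨e⟩⟩ := h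
  refine ⟨fun a ha b hb hab => ?_, hcard⟩
  refine (e.map_adj_iff (v := ⟨a, ha⟩) (w := ⟨b, hb⟩)).1 ?_
  have hcomplete : ∀ i j : Fin 3, i ≠ j → (cycleGraph 3).Adj i j := by decide
  exact hcomplete _ _ (e.injective.ne (Subtype.coe_ne_coe.1 hab))

theorem IsInducedCycle.exists_embedding {V : Type*} {G : SimpleGraph V} {n : ℕ} {s : Finset V}
    (h : IsInducedCycle G n s) : ∃ f : cycleGraph n ↪g G, Set.range f = s := by
  obtain ⟨-, -, ⟨e⟩⟩ := h
  refine ⟨(Embedding.induce (s : Set V)).comp e.symm.toEmbedding, ?_⟩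
  change Set.range (Subtype.val ∘ e.symm) = s
  rw [Set.range_comp, e.symm.surjective.range_eq, Set.image_univ, Subtype.range_coe]

theorem not_tPerfect_of_indepSet_card_le {V : Type*} [Fintype V] {G : SimpleGraph V}
    {x : V → ℝ} (hx : x ∈ tPolytope G) {k : ℕ}
    (hα : ∀ t : Finset V, G.IsIndepSet (t : Set V) → t.card ≤ k)
    (hsum : (k : ℝ) < ∑ v, x v) :
    ¬ TPerfect G := by
  classical
  intro hG
  have hconv : Convex ℝ {y : V → ℝ | ∑ v, y v ≤ k} :=
    convex_halfSpace_le
      ⟨fun _ _ => Finset.sum_add_distrib, fun _ _ => by simp [Finset.mul_sum]⟩ _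
  have hvert : {y | ∃ S : Set V, IsIndep G S ∧ y = S.indicator fun _ => (1 : ℝ)} ⊆
      {y : V → ℝ | ∑ v, y v ≤ k} := by
    rintro _ ⟨S, hS, rfl⟩
    simp only [Set.mem_ofPred_eq, Set.indicator_apply, Finset.sum_boole,
      Set.filter_mem_univ_eq_toFinset]
    exact_mod_cast hα _ (by rw [Set.coe_toFinset]; exact hS)
  have hx' : x ∈ stabPolytope G := hG ▸ hx
  exact hsum.not_ge (convexHull_min hvert hconv hx')

theorem not_tPerfect_completeGraph_four : ¬ TPerfect (completeGraph (Fin 4)) := by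
  refine not_tPerfect_of_indepSet_card_le (x := fun _ => 1 / 3) ⟨fun _ => by norm_num,
    fun _ _ _ => by norm_num, fun n s hodd hs => ?_⟩ (k := 1) (by decide) (by norm_num)
  have hn : n ≤ 4 := hs.2.1 ▸ s.card_le_univ.trans_eq (Fintype.card_fin 4)
  obtain rfl : n = 3 := by obtain ⟨k, rfl⟩ := hodd; have := hs.1; omega
  norm_num [hs.2.1]

-- The graph induced by an `n`-hole and one more vertex `none` with neighbours `I` on the hole.
def apex (n : ℕ) (I : Finset (Fin n)) : SimpleGraph (Option (Fin n)) where
  Adj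
    | some i, some j => (cycleGraph n).Adj i j
    | none, some j => j ∈ I
    | some i, none => i ∈ I
    | none, none => False
  symm := ⟨by
    rintro (_ | i) (_ | j) h
    iterate 3 exact h
    exact h.symm⟩
  loopless := ⟨by
    rintro (_ | i) h
    · exact h
    · exact (cycleGraph n).irrefl h⟩

instance (n : ℕ) (I : Finset (Fin n)) : DecidableRel (apex n I).Adj
  | some i, some j => inferInstanceAs (Decidable ((cycleGraph n).Adj i j))
  | none, some j => inferInstanceAs (Decidable (j ∈ I))
  | some i, none => inferInstanceAs (Decidable (i ∈ I))
  | none, none => inferInstanceAs (Decidable False)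

theorem apex_univ (n : ℕ) : apex n Finset.univ = wheel n := by
  ext (_ | i) (_ | j) <;> simp [apex, wheel, SimpleGraph.adj_comm]
  exact Adj.ne

theorem not_tPerfect_wheel_five : ¬ TPerfect (wheel 5) := by
  rw [← apex_univ]
  let x : Option (Fin 5) → ℝ := fun a => a.elim (1 / 5) fun _ => 2 / 5
  have hx : ∀ a, x a ≤ 2 / 5 := by rintro (_ | _) <;> norm_num [x]
  refine not_tPerfect_of_indepSet_card_le (x := x) (k := 2) ⟨fun a => ?_, fun a b _ => ?_,
    fun n s hodd hs => ?_⟩ (by decide) ?_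
  · constructor <;> linarith [hx a, show 0 ≤ x a by cases a <;> norm_num [x]]
  · linarith [hx a, hx b]
  · have hn : n ≤ 6 := hs.2.1 ▸ s.card_le_univ.trans_eq (by simp)
    obtain ⟨k, rfl⟩ := hodd
    obtain rfl | rfl : k = 1 ∨ k = 2 := by have := hs.1; omega
    · have hnone : none ∈ s :=
        (by decide : ∀ t, (apex 5 .univ).IsNClique 3 t → none ∈ t) s hs.isNClique_three
      rw [← Finset.add_sum_erase s x hnone]
      have := Finset.sum_le_card_nsmul (s.erase none) x (2 / 5) (fun a _ => hx a)
      rw [Finset.card_erase_of_mem hnone, hs.2.1] at this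
      norm_num [x] at this ⊢
      linarith
    · have := Finset.sum_le_card_nsmul s x (2 / 5) (fun a _ => hx a)
      rw [hs.2.1] at this
      norm_num at this ⊢
      linarith
  · simp [x, Fintype.sum_option]
    norm_num

def apexEmbedding {V : Type*} {G : SimpleGraph V} [DecidableRel G.Adj] {n : ℕ}
    (f : cycleGraph n ↪g G) (u : V) (hu : u ∉ Set.range f) :
    apex n (Finset.univ.filter fun i => G.Adj u (f i)) ↪g G where
  toFun a := a.elim u f
  inj' := by
    rintro (_ | i) (_ | j) h
    · rfl
    · exact absurd ⟨j, h.symm⟩ hu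
    · exact absurd ⟨i, h⟩ hu
    · exact congrArg some (f.injective h)
  map_rel_iff' := by
    rintro (_ | i) (_ | j)
    · exact iff_of_false (G.irrefl) id
    · exact (show G.Adj u (f j) ↔ _ from Iff.rfl).trans (by simp [apex])
    · exact (show G.Adj (f i) u ↔ _ from G.adj_comm _ _).trans (by simp [apex])
    · exact (show G.Adj (f i) (f j) ↔ _ from f.map_adj_iff)

def IsAdmissibleNbhd (I : Finset (Fin 5)) : Prop :=
  Xor' (I.card = 2 ∧ ∃ i ∈ I, ∃ j ∈ I, (cycleGraph 5).Adj i j)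
    (I.card = 3 ∧ ¬ ∃ i ∈ I, ∃ j ∈ I, ∃ k ∈ I,
      i ≠ k ∧ (cycleGraph 5).Adj i j ∧ (cycleGraph 5).Adj j k)

instance (I : Finset (Fin 5)) : Decidable (IsAdmissibleNbhd I) :=
  inferInstanceAs (Decidable (_ ∧ ¬ _ ∨ _ ∧ ¬ _))

theorem xor_iff_isAdmissibleNbhd {V : Type*} {G : SimpleGraph V} [DecidableRel G.Adj]
    {s : Finset V} (f : cycleGraph 5 ↪g G) (hs : Set.range f = s) (u : V) :
    Xor'
        ({w : V | w ∈ s ∧ G.Adj u w}.ncard = 2 ∧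
          ∃ a b : V, a ∈ s ∧ b ∈ s ∧ G.Adj u a ∧ G.Adj u b ∧ G.Adj a b)
        ({w : V | w ∈ s ∧ G.Adj u w}.ncard = 3 ∧
          ¬ ∃ a b c : V, (a ∈ s ∧ G.Adj u a) ∧ (b ∈ s ∧ G.Adj u b) ∧
            (c ∈ s ∧ G.Adj u c) ∧ a ≠ c ∧ G.Adj a b ∧ G.Adj b c) ↔
      IsAdmissibleNbhd (Finset.univ.filter fun i => G.Adj u (f i)) := by
  have hmem (w : V) : w ∈ s ↔ ∃ i, f i = w := by
    rw [← Finset.mem_coe, ← hs, Set.mem_range]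
  have himage :
      {w : V | w ∈ s ∧ G.Adj u w} = f '' (Finset.univ.filter fun i => G.Adj u (f i)) := by
    ext w
    simp only [Set.mem_ofPred_eq, hmem, Finset.coe_filter, Finset.mem_univ, true_and,
      Set.mem_image]
    exact ⟨fun ⟨⟨i, hi⟩, h⟩ => ⟨i, hi ▸ h, hi⟩, fun ⟨i, h, hi⟩ => ⟨⟨i, hi⟩, hi ▸ h⟩⟩
  rw [himage, Set.ncard_image_of_injective _ f.injective, Set.ncard_coe_finset, IsAdmissibleNbhd]
  simp [hmem, f.map_adj_iff]

-- Stated with explicit quantifiers rather than `IsIndep` and `≃g` so that it is decidable.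
def ContractsToK4 {V : Type*} [Fintype V] [DecidableEq V] (G : SimpleGraph V)
    [DecidableRel G.Adj] : Prop :=
  ∃ v, (∀ x y, G.Adj v x → G.Adj v y → ¬ G.Adj x y) ∧
    Fintype.card (Option {w : V // w ≠ v ∧ ¬ G.Adj v w}) = 4 ∧
    ∀ x y : Option {w : V // w ≠ v ∧ ¬ G.Adj v w}, x ≠ y → (tContract G v).Adj x y

instance {V : Type*} [Fintype V] [DecidableEq V] (G : SimpleGraph V) [DecidableRel G.Adj] :
    Decidable (ContractsToK4 G) :=
  inferInstanceAs (Decidable (∃ _, _))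

theorem ContractsToK4.contractStep {V : Type} [Fintype V] [DecidableEq V] {G : SimpleGraph V}
    [DecidableRel G.Adj] (h : ContractsToK4 G) :
    ContractStep (FinGraph.of G) (FinGraph.of (completeGraph (Fin 4))) := by
  obtain ⟨v, hind, hcard, hcomplete⟩ := h
  let e := (Fintype.equivFinOfCardEq hcard).symm
  refine ⟨v, fun x hx y hy _ => hind x y hx hy, ⟨⟨e, fun {a b} => ?_⟩⟩⟩
  simp only [FinGraph.of, completeGraph]
  exact ⟨fun h hab => (tContract G v).ne_of_adj h (by rw [hab]),
    fun hab => hcomplete _ _ (e.injective.ne hab)⟩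

-- When three consecutive cycle vertices are neighbours of the apex and the vertex opposite
-- them is not, contracting at that vertex gives `K₄`; similarly in the complement.
theorem apex_five_classification (I : Finset (Fin 5)) :
    IsAdmissibleNbhd I ∨ I = Finset.univ ∨ I = ∅ ∨
      ContractsToK4 (apex 5 I) ∨ ContractsToK4 (apex 5 I)ᶜ := by
  revert I
  decide

-- Doubling maps the 5-cycle onto its complement.
def apexEmptyComplIso : (apex 5 ∅)ᶜ ≃g apex 5 Finset.univ where
  toEquiv := Equiv.optionCongr ⟨(2 * ·), (3 * ·), by decide, by decide⟩
  map_rel_iff' := by decide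

abbrev ProperTMinorsTPerfect {V : Type} [Fintype V] (G : SimpleGraph V) : Prop :=
  ∀ B : FinGraph, ProperTMinor B (FinGraph.of G) → TPerfect B.graph

section Core

variable {V W : Type} [Fintype V] [Fintype W] {G : SimpleGraph V}

theorem false_of_contractsToK4 (hG : ProperTMinorsTPerfect G) [DecidableEq W]
    {H : SimpleGraph W} [DecidableRel H.Adj] (g : H ↪g G) (hH : ContractsToK4 H)
    (hW : 4 < Fintype.card W) : False :=
  not_tPerfect_completeGraph_four
    (hG _ (properTMinor_of_embedding_of_contractStep g hH.contractStep
      ((Fintype.card_fin 4).trans_lt hW)))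

theorem nonempty_iso_wheel_five_of_embedding (hG : ProperTMinorsTPerfect G)
    (g : apex 5 Finset.univ ↪g G) : Nonempty (G ≃g wheel 5) := by
  rw [← apex_univ]
  by_cases hg : Function.Surjective g
  · exact ⟨(RelIso.ofSurjective g hg).symm⟩
  · exact (not_tPerfect_wheel_five (apex_univ 5 ▸ hG _ (properTMinor_of_embedding g hg))).elim

end Core

/-- in a core graph different from `W5` and its complement, every vertex
outside a 5-hole has either exactly two neighbours on it which are consecutive, or
exactly three neighbours on it which are not consecutive. -/
theorem stmt5 {V : Type} [Fintype V] (G : SimpleGraph V)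
    (hc : IsCore G)
    (hw : IsEmpty (G ≃g wheel 5)) (hwc : IsEmpty (G ≃g (wheel 5)ᶜ))
    (s : Finset V) (hs : IsInducedCycle G 5 s) :
    ∀ u : V, u ∉ s →
      Xor'
        ({w : V | w ∈ s ∧ G.Adj u w}.ncard = 2 ∧
          ∃ a b : V, a ∈ s ∧ b ∈ s ∧ G.Adj u a ∧ G.Adj u b ∧ G.Adj a b)
        ({w : V | w ∈ s ∧ G.Adj u w}.ncard = 3 ∧
          ¬ ∃ a b c : V, (a ∈ s ∧ G.Adj u a) ∧ (b ∈ s ∧ G.Adj u b) ∧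
            (c ∈ s ∧ G.Adj u c) ∧ a ≠ c ∧ G.Adj a b ∧ G.Adj b c) := by
  classical
  intro u hu
  obtain ⟨f, hf⟩ := hs.exists_embedding
  let g := apexEmbedding f u (hf ▸ hu)
  rw [xor_iff_isAdmissibleNbhd f hf]
  rcases apex_five_classification (Finset.univ.filter fun i => G.Adj u (f i)) with
    h | h | h | h | h
  · exact h
  · exact hw.elim (nonempty_iso_wheel_five_of_embedding hc.1 (h ▸ g)).some
  · obtain ⟨e⟩ := nonempty_iso_wheel_five_of_embedding hc.2
      ((Embedding.complEquiv (h ▸ g)).comp apexEmptyComplIso.symm.toEmbedding)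
    exact hwc.elim (compl_compl G ▸ e.compl)
  · exact (false_of_contractsToK4 hc.1 g h (by simp)).elim
  · exact (false_of_contractsToK4 hc.2 (Embedding.complEquiv g) h (by simp)).elim

end TP
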